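/- arXiv:2411.12822 — 2 statements merged into one kernel-verified Lean document; each statement's English description precedes it below -/
import Mathlib

section
/- Let ⊑̃ on Delay(ℕ + Unit) be the closure of the lock-step error ordering under weak bisimilarity on both sides: d ⊑̃ d' iff there exist e, e' with d ≈ e, e ≤ e', e' ≈ d'. If d ⊑̃ d', then the corresponding partial results satisfy: (1) if d ↓ inl n then d' ↓ inl n; (2) if d' ↓ inr ℧ then d ↓ inr ℧; (3) if d' ↓ inl n then d ↓ inl n or d ↓ inr ℧. -/
/-- `d ↓ x`: the delay computation `d` (an element of `Computation X`,
Mathlib's coinductive delay monad, with `pure` as `now` and `think` as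
`later`) terminates with value `x`, i.e. `d = later^i (now x)` for some `i`. -/
def Conv {X : Type} (d : Computation X) (x : X) : Prop :=
  ∃ i : ℕ, d = Computation.think^[i] (Computation.pure x)

/-- One unfolding step of the coinductively defined weak bisimilarity on
`Delay(X)` over an underlying relation `r` on `X`:
`now x ≈ now y` if `r x y`; `later d ≈ now y` if `d ↓ x` with `r x y`;
`now x ≈ later d` if `d ↓ y` with `r x y`; `later d₁ ≈ later d₂` if `d₁ ≈ d₂`. -/
def WBisimF {X : Type} (r : X → X → Prop)
    (S : Computation X → Computation X → Prop)
    (d d' : Computation X) : Prop :=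
  (∃ x y, r x y ∧ d = Computation.pure x ∧ d' = Computation.pure y) ∨
  (∃ e y, d = Computation.think e ∧ d' = Computation.pure y ∧
      ∃ x, Conv e x ∧ r x y) ∨
  (∃ x e, d = Computation.pure x ∧ d' = Computation.think e ∧
      ∃ y, Conv e y ∧ r x y) ∨
  (∃ e e', d = Computation.think e ∧ d' = Computation.think e' ∧ S e e')

/-- Weak bisimilarity, as the greatest fixed point of `WBisimF`. -/
def WBisim {X : Type} (r : X → X → Prop) (d d' : Computation X) : Prop :=
  ∃ S, (∀ a b, S a b → WBisimF r S a b) ∧ S d d'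

/-- One unfolding step of the coinductively defined lock-step error
ordering on `Delay(X + Unit)` (`Computation (X ⊕ Unit)` in Mathlib, with
`pure` as `now` and `think` as `later`; the error `℧` is `Sum.inr ()`):
`now (inr ℧) ≤ d`; `now (inl x₁) ≤ now (inl x₂)` whenever `x₁ ≤_X x₂`;
`later d₁ ≤ later d₂` whenever `d₁ ≤ d₂`. -/
def LockStepF {X : Type} (le : X → X → Prop)
    (S : Computation (X ⊕ Unit) → Computation (X ⊕ Unit) → Prop)
    (d d' : Computation (X ⊕ Unit)) : Prop :=
  d = Computation.pure (Sum.inr ()) ∨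
  (∃ x₁ x₂, le x₁ x₂ ∧ d = Computation.pure (Sum.inl x₁) ∧
      d' = Computation.pure (Sum.inl x₂)) ∨
  (∃ e e', d = Computation.think e ∧ d' = Computation.think e' ∧ S e e')

/-- The lock-step error ordering, as the greatest fixed point of
`LockStepF`: `d ≤ d'` iff some post-fixed point (lock-step simulation)
relates `d` and `d'`. -/
def LockStep {X : Type} (le : X → X → Prop)
    (d d' : Computation (X ⊕ Unit)) : Prop :=
  ∃ S, (∀ a b, S a b → LockStepF le S a b) ∧ S d d'

/-- The extensional error ordering `⊑̃` on `Delay(ℕ + Unit)`: the closure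
of the lock-step error ordering (over equality on `ℕ`) under weak
bisimilarity (over equality on `ℕ ⊕ Unit`) on both sides. -/
def ExtOrd (d d' : Computation (ℕ ⊕ Unit)) : Prop :=
  ∃ e e', WBisim Eq d e ∧ LockStep Eq e e' ∧ WBisim Eq e' d'


namespace GradAux

lemma pure_ne_think {X : Type} (x : X) (d : Computation X) :
    Computation.pure x ≠ Computation.think d := by
  intro h
  have := congrArg Computation.destruct h
  rw [Computation.destruct_pure, Computation.destruct_think] at this
  cases this

lemma pure_inj {X : Type} {x y : X}
    (h : Computation.pure x = Computation.pure y) : x = y := by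
  have := congrArg Computation.destruct h
  rw [Computation.destruct_pure, Computation.destruct_pure] at this
  exact Sum.inl.inj this

lemma think_inj {X : Type} {d e : Computation X}
    (h : Computation.think d = Computation.think e) : d = e := by
  have := congrArg Computation.destruct h
  rw [Computation.destruct_think, Computation.destruct_think] at this
  exact Sum.inr.inj this

lemma iter_succ {X : Type} (i : ℕ) (x : X) :
    Computation.think^[i + 1] (Computation.pure x)
      = Computation.think (Computation.think^[i] (Computation.pure x)) :=
  Function.iterate_succ_apply' _ _ _

lemma conv_pure {X : Type} {x y : X} (h : Conv (Computation.pure x) y) :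
    x = y := by
  obtain ⟨i, hi⟩ := h
  cases i with
  | zero => exact pure_inj hi
  | succ i => rw [iter_succ] at hi; exact absurd hi (pure_ne_think _ _)

lemma conv_think {X : Type} {d : Computation X} {y : X}
    (h : Conv (Computation.think d) y) : Conv d y := by
  obtain ⟨i, hi⟩ := h
  cases i with
  | zero => exact absurd hi.symm (pure_ne_think _ _)
  | succ i => rw [iter_succ] at hi; exact ⟨i, think_inj hi⟩

lemma conv_think_intro {X : Type} {d : Computation X} {y : X}
    (h : Conv d y) : Conv (Computation.think d) y := by
  obtain ⟨i, hi⟩ := h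
  exact ⟨i + 1, by rw [iter_succ, hi]⟩

lemma conv_det_aux {X : Type} {x y : X} :
    ∀ i, Conv (Computation.think^[i] (Computation.pure x)) y → x = y := by
  intro i
  induction i with
  | zero => exact fun h => conv_pure h
  | succ i ih =>
    rw [iter_succ]
    exact fun h => ih (conv_think h)

lemma conv_det {X : Type} {d : Computation X} {x y : X}
    (hx : Conv d x) (hy : Conv d y) : x = y := by
  obtain ⟨i, hi⟩ := hx
  subst hi
  exact conv_det_aux i hy

section LS

variable {S : Computation (ℕ ⊕ Unit) → Computation (ℕ ⊕ Unit) → Prop}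
  (hS : ∀ a b, S a b → LockStepF Eq S a b)

include hS

lemma ls_fwd {n : ℕ} : ∀ i (e e' : Computation (ℕ ⊕ Unit)), S e e' →
    e = Computation.think^[i] (Computation.pure (Sum.inl n)) →
    Conv e' (Sum.inl n) := by
  intro i
  induction i with
  | zero =>
    intro e e' hs he
    rcases hS _ _ hs with h1 | ⟨x₁, x₂, hx, h1, h2⟩ | ⟨f, f', h1, h2, _⟩
    · rw [he] at h1; exact absurd (pure_inj h1) (by simp)
    · rw [he] at h1
      cases pure_inj h1
      cases hx
      exact ⟨0, h2⟩
    · rw [he] at h1; exact absurd h1 (pure_ne_think _ _)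
  | succ i ih =>
    intro e e' hs he
    rw [iter_succ] at he
    rcases hS _ _ hs with h1 | ⟨x₁, x₂, hx, h1, h2⟩ | ⟨f, f', h1, h2, hff⟩
    · rw [he] at h1; exact absurd h1.symm (pure_ne_think _ _)
    · rw [he] at h1; exact absurd h1.symm (pure_ne_think _ _)
    · rw [he] at h1
      rw [h2]
      exact conv_think_intro (ih _ _ hff (think_inj h1).symm)

lemma ls_bwd_err : ∀ i (e e' : Computation (ℕ ⊕ Unit)), S e e' →
    e' = Computation.think^[i] (Computation.pure (Sum.inr ())) →
    Conv e (Sum.inr ()) := by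
  intro i
  induction i with
  | zero =>
    intro e e' hs he
    rcases hS _ _ hs with h1 | ⟨x₁, x₂, hx, h1, h2⟩ | ⟨f, f', h1, h2, _⟩
    · exact ⟨0, h1⟩
    · rw [he] at h2; exact absurd (pure_inj h2) (by simp)
    · rw [he] at h2; exact absurd h2 (pure_ne_think _ _)
  | succ i ih =>
    intro e e' hs he
    rw [iter_succ] at he
    rcases hS _ _ hs with h1 | ⟨x₁, x₂, hx, h1, h2⟩ | ⟨f, f', h1, h2, hff⟩
    · exact ⟨0, h1⟩
    · rw [he] at h2; exact absurd h2.symm (pure_ne_think _ _)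
    · rw [he] at h2
      rw [h1]
      exact conv_think_intro (ih _ _ hff (think_inj h2).symm)

lemma ls_bwd_val {n : ℕ} : ∀ i (e e' : Computation (ℕ ⊕ Unit)), S e e' →
    e' = Computation.think^[i] (Computation.pure (Sum.inl n)) →
    Conv e (Sum.inl n) ∨ Conv e (Sum.inr ()) := by
  intro i
  induction i with
  | zero =>
    intro e e' hs he
    rcases hS _ _ hs with h1 | ⟨x₁, x₂, hx, h1, h2⟩ | ⟨f, f', h1, h2, _⟩
    · exact Or.inr ⟨0, h1⟩
    · rw [he] at h2
      cases Sum.inl.inj (pure_inj h2)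
      cases hx
      exact Or.inl ⟨0, h1⟩
    · rw [he] at h2; exact absurd h2 (pure_ne_think _ _)
  | succ i ih =>
    intro e e' hs he
    rw [iter_succ] at he
    rcases hS _ _ hs with h1 | ⟨x₁, x₂, hx, h1, h2⟩ | ⟨f, f', h1, h2, hff⟩
    · exact Or.inr ⟨0, h1⟩
    · rw [he] at h2; exact absurd h2.symm (pure_ne_think _ _)
    · rw [he] at h2
      rw [h1]
      exact (ih _ _ hff (think_inj h2).symm).imp conv_think_intro conv_think_intro
end LS

lemma wbisim_symm {X : Type} {d e : Computation X}
    (h : WBisim Eq d e) : WBisim Eq e d := by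
  obtain ⟨S, hS, hde⟩ := h
  refine ⟨fun a b => S b a, ?_, hde⟩
  intro a b hba
  rcases hS _ _ hba with ⟨x, y, hxy, h1, h2⟩ | ⟨f, y, h1, h2, x, hc, hxy⟩
    | ⟨x, f, h1, h2, y, hc, hxy⟩ | ⟨f, f', h1, h2, hff⟩
  · exact Or.inl ⟨y, x, hxy.symm, h2, h1⟩
  · exact Or.inr (Or.inr (Or.inl ⟨y, f, h2, h1, x, hc, hxy.symm⟩))
  · exact Or.inr (Or.inl ⟨f, x, h2, h1, y, hc, hxy.symm⟩)
  · exact Or.inr (Or.inr (Or.inr ⟨f', f, h2, h1, hff⟩))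

section WB

variable {X : Type} {S : Computation X → Computation X → Prop}
  (hS : ∀ a b, S a b → WBisimF Eq S a b)

include hS

lemma wb_fwd {x : X} : ∀ i (d e : Computation X), S d e →
    d = Computation.think^[i] (Computation.pure x) → Conv e x := by
  intro i
  induction i with
  | zero =>
    intro d e hs hd
    rcases hS _ _ hs with ⟨x', y, hxy, h1, h2⟩ | ⟨f, y, h1, h2, x', hc, hxy⟩
      | ⟨x', f, h1, h2, y, hc, hxy⟩ | ⟨f, f', h1, h2, hff⟩
    · rw [hd] at h1
      cases pure_inj h1
      cases hxy
      exact ⟨0, h2⟩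
    · rw [hd] at h1; exact absurd h1 (pure_ne_think _ _)
    · rw [hd] at h1
      cases pure_inj h1
      cases hxy
      rw [h2]
      exact conv_think_intro hc
    · rw [hd] at h1; exact absurd h1 (pure_ne_think _ _)
  | succ i ih =>
    intro d e hs hd
    rw [iter_succ] at hd
    rcases hS _ _ hs with ⟨x', y, hxy, h1, h2⟩ | ⟨f, y, h1, h2, x', hc, hxy⟩
      | ⟨x', f, h1, h2, y, hc, hxy⟩ | ⟨f, f', h1, h2, hff⟩
    · rw [hd] at h1; exact absurd h1.symm (pure_ne_think _ _)
    · rw [hd] at h1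
      cases hxy
      have hfx : Conv f x := ⟨i, (think_inj h1).symm⟩
      cases conv_det hc hfx
      exact ⟨0, h2⟩
    · rw [hd] at h1; exact absurd h1.symm (pure_ne_think _ _)
    · rw [hd] at h1
      rw [h2]
      exact conv_think_intro (ih _ _ hff (think_inj h1).symm)

end WB

lemma wbisim_conv {X : Type} {d e : Computation X} {x : X}
    (h : WBisim Eq d e) (hc : Conv d x) : Conv e x := by
  obtain ⟨S, hS, hde⟩ := h
  obtain ⟨i, hi⟩ := hc
  exact wb_fwd hS i _ _ hde hi

end GradAux

/-- Graduality for the extensional error ordering: if `d ⊑̃ d'` then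
(1) if `d ↓ inl n` then `d' ↓ inl n`;
(2) if `d' ↓ ℧` then `d ↓ ℧`;
(3) if `d' ↓ inl n` then `d ↓ inl n` or `d ↓ ℧`. -/
theorem extOrd_graduality (d d' : Computation (ℕ ⊕ Unit))
    (h : ExtOrd d d') :
    (∀ n : ℕ, Conv d (Sum.inl n) → Conv d' (Sum.inl n)) ∧
    (Conv d' (Sum.inr ()) → Conv d (Sum.inr ())) ∧
    (∀ n : ℕ, Conv d' (Sum.inl n) →
      Conv d (Sum.inl n) ∨ Conv d (Sum.inr ())) := by
  obtain ⟨e, e', hde, ⟨S, hS, hee⟩, he'd'⟩ := h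
  have hd'e' := GradAux.wbisim_symm he'd'
  refine ⟨?_, ?_, ?_⟩
  · intro n hc
    have h1 := GradAux.wbisim_conv hde hc
    obtain ⟨i, hi⟩ := h1
    exact GradAux.wbisim_conv he'd' (GradAux.ls_fwd hS i _ _ hee hi)
  · intro hc
    have h1 := GradAux.wbisim_conv hd'e' hc
    obtain ⟨i, hi⟩ := h1
    exact GradAux.wbisim_conv (GradAux.wbisim_symm hde) (GradAux.ls_bwd_err hS i _ _ hee hi)
  · intro n hc
    have h1 := GradAux.wbisim_conv hd'e' hc
    obtain ⟨i, hi⟩ := h1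
    exact (GradAux.ls_bwd_val hS i _ _ hee hi).imp
      (GradAux.wbisim_conv (GradAux.wbisim_symm hde))
      (GradAux.wbisim_conv (GradAux.wbisim_symm hde))
end

section
/- Composition of quasi-left-representable relations: Let A₁, A₂, A₃ be preordered sets with monoid actions, and let c ⊆ A₁ × A₂, c' ⊆ A₂ × A₃ be poset relations with push-pull structures. If c is quasi-left-representable by e_c with perturbations (δˡ_c, δʳ_c) and c' is quasi-left-representable by e_{c'} with perturbations (δˡ_{c'}, δʳ_{c'}), then the composition c ∘ c' is quasi-left-representable by e_{c'} ∘ e_c, with perturbations δˡ = pull_c(δˡ_{c'}) · δˡ_c and δʳ = δʳ_{c'} · push_{c'}(δʳ_c). -/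
/-- Composition of quasi-left-representable relations: let `A₁, A₂, A₃`
be preordered sets with monoid actions `iₖ : Mₖ →* End Aₖ` by monotone
endofunctions, and let `c ⊆ A₁ × A₂`, `c' ⊆ A₂ × A₃` be poset relations
with push-pull structures. If `c` is quasi-left-representable by `e_c`
with perturbations `(δˡ_c, δʳ_c)` and `c'` is quasi-left-representable
by `e_c'` with perturbations `(δˡ_c', δʳ_c')`, then the relational
composition `c ∘ c'` is quasi-left-representable by `e_c' ∘ e_c` with
perturbations `δˡ = pull_c(δˡ_c') · δˡ_c` and
`δʳ = δʳ_c' · push_c'(δʳ_c)`. -/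
theorem quasiLeftRep_comp
    {A₁ A₂ A₃ M₁ M₂ M₃ : Type}
    [Preorder A₁] [Preorder A₂] [Preorder A₃]
    [Monoid M₁] [Monoid M₂] [Monoid M₃]
    (i₁ : M₁ →* Function.End A₁) (i₂ : M₂ →* Function.End A₂)
    (i₃ : M₃ →* Function.End A₃)
    (hmono₁ : ∀ m, Monotone (i₁ m)) (hmono₂ : ∀ m, Monotone (i₂ m))
    (hmono₃ : ∀ m, Monotone (i₃ m))
    (c : A₁ → A₂ → Prop) (c' : A₂ → A₃ → Prop)
    -- poset relations: downward closed on the left, upward closed on the right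
    (hdc : ∀ x' x y, x' ≤ x → c x y → c x' y)
    (huc : ∀ x y y', c x y → y ≤ y' → c x y')
    (hdc' : ∀ y' y z, y' ≤ y → c' y z → c' y' z)
    (huc' : ∀ y z z', c' y z → z ≤ z' → c' y z')
    -- push-pull structure for c
    (pushc : M₁ →* M₂) (pullc : M₂ →* M₁)
    (hpushc : ∀ (m : M₁) x y, c x y → c (i₁ m x) (i₂ (pushc m) y))
    (hpullc : ∀ (m' : M₂) x y, c x y → c (i₁ (pullc m') x) (i₂ m' y))
    -- push-pull structure for c'
    (pushc' : M₂ →* M₃) (pullc' : M₃ →* M₂)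
    (hpushc' : ∀ (m : M₂) y z, c' y z → c' (i₂ m y) (i₃ (pushc' m) z))
    (hpullc' : ∀ (m' : M₃) y z, c' y z → c' (i₂ (pullc' m') y) (i₃ m' z))
    -- quasi-left-representability of c by e_c
    (ec : A₁ → A₂) (δlc : M₁) (δrc : M₂)
    (hUpLc : ∀ x y, c x y → ec x ≤ i₂ δrc y)
    (hUpRc : ∀ x₁ x₂, x₁ ≤ x₂ → c (i₁ δlc x₁) (ec x₂))
    -- quasi-left-representability of c' by e_c'
    (ec' : A₂ → A₃) (δlc' : M₂) (δrc' : M₃)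
    (hUpLc' : ∀ y z, c' y z → ec' y ≤ i₃ δrc' z)
    (hUpRc' : ∀ y₁ y₂, y₁ ≤ y₂ → c' (i₂ δlc' y₁) (ec' y₂)) :
    (∀ x z, (∃ y, c x y ∧ c' y z) →
      ec' (ec x) ≤ i₃ (δrc' * pushc' δrc) z) ∧
    (∀ x₁ x₂, x₁ ≤ x₂ →
      ∃ y, c (i₁ (pullc δlc' * δlc) x₁) y ∧ c' y (ec' (ec x₂))) := by
  constructor
  · rintro x z ⟨y, hxy, hyz⟩
    have h1 : ec x ≤ i₂ δrc y := hUpLc x y hxy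
    have h2 : c' (i₂ δrc y) (i₃ (pushc' δrc) z) := hpushc' δrc y z hyz
    have h3 : c' (ec x) (i₃ (pushc' δrc) z) := hdc' _ _ _ h1 h2
    have h4 := hUpLc' _ _ h3
    simpa [map_mul, Function.End.mul_def, Function.comp] using h4
  · intro x₁ x₂ h
    refine ⟨i₂ δlc' (ec x₂), ?_, hUpRc' _ _ le_rfl⟩
    have := hpullc δlc' _ _ (hUpRc x₁ x₂ h)
    simpa [map_mul, Function.End.mul_def, Function.comp] using this
end
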